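/- arXiv:1510.00505 — 2 statements merged into one kernel-verified Lean document; each statement's English description precedes it below -/
import Mathlib

section
/- Let d ≥ 1, c₀ ∈ (0,1), K > 0 and N ≥ 1 be given, let Λ ⊂ ℤ^d be a finite set, and let θ assign to each x ∈ Λ a probability vector θ(x) = (θ₀(x),θ₁(x),θ₂(x),θ₃(x)) with all entries ≥ c₀ and such that |θ_i(x)θ_j(y) − θ_i(y)θ_j(x)| ≤ (K/N)·θ_i(y)θ_j(x) for all nearest-neighbour pairs x, y ∈ Λ and all i, j ∈ {0,1,2,3}; let ν_θ be the corresponding product measure. Define the exchange generator 𝓛f(η) = ∑_{k=1}^d ∑_{x : x, x+e_k ∈ Λ} (f(η^{x,x+e_k}) − f(η)) and the Dirichlet form 𝒟⁰(f) = ∑_{k=1}^d ∑_{x : x, x+e_k ∈ Λ} ∫ (√f(η^{x,x+e_k}) − √f(η))² dν_θ. Then there exist constants A₀ > 0 and A₀′ > 0, depending only on d, c₀ and K, such that for every f : {0,1,2,3}^Λ → [0,∞), ∫ √f · (𝓛√f) dν_θ ≤ −A₀ 𝒟⁰(f) + A₀′ |Λ| N^{−2} ∫ f dν_θ. -/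
open Finset

noncomputable section

/-- The configuration obtained from `ζ` by exchanging the values at `a`,`b`. -/
def swapAt {d : ℕ} {Λ : Finset (Fin d → ℤ)} (ζ : ↥Λ → Fin 4) (a b : ↥Λ) :
    ↥Λ → Fin 4 :=
  fun z => if z = a then ζ b else if z = b then ζ a else ζ z

/-- Weight of a configuration under the product measure `ν_θ`. -/
def prodWeight {d : ℕ} (Λ : Finset (Fin d → ℤ)) (θ : (Fin d → ℤ) → Fin 4 → ℝ)
    (ζ : ↥Λ → Fin 4) : ℝ :=
  ∏ x : ↥Λ, θ x.1 (ζ x)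

/-- The exchange (stirring) generator
`𝓛 f(η) = ∑_k ∑_{x, x+e_k ∈ Λ} (f(η^{x,x+e_k}) − f(η))`. -/
def exchGen {d : ℕ} (Λ : Finset (Fin d → ℤ)) (f : (↥Λ → Fin 4) → ℝ)
    (ζ : ↥Λ → Fin 4) : ℝ :=
  ∑ k : Fin d, ∑ x : ↥Λ,
    if h : (x.1 + Pi.single k 1) ∈ Λ then
      f (swapAt ζ x ⟨x.1 + Pi.single k 1, h⟩) - f ζ
    else 0

/-- The exchange Dirichlet form
`𝒟⁰(f) = ∑_k ∑_{x, x+e_k ∈ Λ} ∫ (√f(η^{x,x+e_k}) − √f(η))² dν_θ`. -/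
def exchDirichlet {d : ℕ} (Λ : Finset (Fin d → ℤ)) (θ : (Fin d → ℤ) → Fin 4 → ℝ)
    (f : (↥Λ → Fin 4) → ℝ) : ℝ :=
  ∑ k : Fin d, ∑ x : ↥Λ,
    if h : (x.1 + Pi.single k 1) ∈ Λ then
      ∑ ζ : ↥Λ → Fin 4, prodWeight Λ θ ζ *
        (Real.sqrt (f (swapAt ζ x ⟨x.1 + Pi.single k 1, h⟩)) - Real.sqrt (f ζ)) ^ 2
    else 0

/-! ### Auxiliary lemmas -/

lemma swapAt_involutive {d : ℕ} {Λ : Finset (Fin d → ℤ)} (a b : ↥Λ) :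
    Function.Involutive (fun ζ : ↥Λ → Fin 4 => swapAt ζ a b) := by
  intro ζ
  funext z
  simp only [swapAt]
  split_ifs with h1 h2 h3 h4 h5 <;>
    first
      | rfl
      | (try subst h1) <;> (try subst h2) <;> (try subst h3) <;>
        (try subst h4) <;> (try subst h5) <;> simp_all

lemma quad_bound (u s a b δ : ℝ) (hu : 0 ≤ u) (hδ : 0 ≤ δ) (ha : 0 ≤ a)
    (hb : 0 ≤ b) (h1 : s ≤ δ * u) (h2 : -(δ * u) ≤ s) :
    s * (a ^ 2 - b ^ 2) ≤
      (1/2) * (u * (b - a) ^ 2) + δ ^ 2 * (u * a ^ 2) + δ ^ 2 * (u * b ^ 2) := by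
  rcases le_total b a with h | h
  · nlinarith [mul_nonneg (sub_nonneg.2 h1) (mul_nonneg (sub_nonneg.2 h) (by linarith : (0:ℝ) ≤ a + b)),
      mul_nonneg hu (sq_nonneg (δ * (a + b) - (a - b))),
      mul_nonneg (mul_nonneg hu (sq_nonneg δ)) (sq_nonneg (a - b))]
  · nlinarith [mul_nonneg (by linarith : (0:ℝ) ≤ s + δ * u) (mul_nonneg (sub_nonneg.2 h) (by linarith : (0:ℝ) ≤ a + b)),
      mul_nonneg hu (sq_nonneg (δ * (a + b) - (b - a))),
      mul_nonneg (mul_nonneg hu (sq_nonneg δ)) (sq_nonneg (a - b))]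

lemma key_bound {ι : Type*} [Fintype ι] (T : ι → ι) (hT : Function.Involutive T)
    (W g : ι → ℝ) (hW : ∀ i, 0 ≤ W i) (hg : ∀ i, 0 ≤ g i) (δ : ℝ) (hδ : 0 ≤ δ)
    (hWT : ∀ i, |W (T i) - W i| ≤ δ * W i) :
    ∑ i, W i * (g i * (g (T i) - g i)) ≤
      -(1/4) * (∑ i, W i * (g (T i) - g i) ^ 2)
        + (δ ^ 2 * (2 + δ) / 4) * ∑ i, W i * (g i) ^ 2 := by
  have hsum : ∀ F : ι → ℝ, ∑ i, F (T i) = ∑ i, F i := fun F =>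
    Fintype.sum_bijective T hT.bijective _ _ (fun i => rfl)
  set D := ∑ i, W i * (g (T i) - g i) ^ 2 with hD
  set F2 := ∑ i, W i * (g i) ^ 2 with hF2
  set E := ∑ i, W i * ((g (T i)) ^ 2 - (g i) ^ 2) with hE
  set GT2 := ∑ i, W i * (g (T i)) ^ 2 with hGT2
  have hD0 : 0 ≤ D := sum_nonneg fun i _ => mul_nonneg (hW i) (sq_nonneg _)
  have hF20 : 0 ≤ F2 := sum_nonneg fun i _ => mul_nonneg (hW i) (sq_nonneg _)
  have hS : ∑ i, W i * (g i * (g (T i) - g i)) = -(1/2) * D + (1/2) * E := by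
    rw [hD, hE, Finset.mul_sum, Finset.mul_sum, ← Finset.sum_add_distrib]
    exact sum_congr rfl fun i _ => by ring
  have hvar : ∑ i, W (T i) * ((g i) ^ 2 - (g (T i)) ^ 2) = E := by
    have h := hsum (fun i => W i * ((g (T i)) ^ 2 - (g i) ^ 2))
    simp only [hT _] at h
    exact h
  have hEsym : 2 * E = ∑ i, (W (T i) - W i) * ((g i) ^ 2 - (g (T i)) ^ 2) := by
    rw [two_mul]
    nth_rewrite 1 [← hvar]
    rw [hE, ← Finset.sum_add_distrib]
    exact sum_congr rfl fun i _ => by ring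
  have hEbd : 2 * E ≤ (1/2) * D + δ ^ 2 * F2 + δ ^ 2 * GT2 := by
    rw [hEsym, hD, hF2, hGT2, Finset.mul_sum, Finset.mul_sum, Finset.mul_sum,
      ← Finset.sum_add_distrib, ← Finset.sum_add_distrib]
    refine sum_le_sum fun i _ => ?_
    have h12 := abs_le.mp (hWT i)
    exact quad_bound (W i) (W (T i) - W i) (g i) (g (T i)) δ (hW i) hδ (hg i)
      (hg (T i)) h12.2 (by linarith [h12.1])
  have hGT2bd : GT2 ≤ (1 + δ) * F2 := by
    have h := hsum (fun i => W (T i) * (g i) ^ 2)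
    simp only [hT _] at h
    rw [hGT2, h, hF2, Finset.mul_sum]
    refine sum_le_sum fun i _ => ?_
    have h12 := abs_le.mp (hWT i)
    nlinarith [sq_nonneg (g i), hW i]
  have hmul : δ ^ 2 * GT2 ≤ δ ^ 2 * ((1 + δ) * F2) :=
    mul_le_mul_of_nonneg_left hGT2bd (sq_nonneg δ)
  nlinarith [hS, hEbd, hmul, hD0, hF20]

lemma prodWeight_nonneg {d : ℕ} (Λ : Finset (Fin d → ℤ))
    (θ : (Fin d → ℤ) → Fin 4 → ℝ) (hθ0 : ∀ x ∈ Λ, ∀ j, 0 ≤ θ x j)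
    (ζ : ↥Λ → Fin 4) : 0 ≤ prodWeight Λ θ ζ :=
  Finset.prod_nonneg fun z _ => hθ0 z.1 z.2 _

lemma prodWeight_swap_close {d : ℕ} (Λ : Finset (Fin d → ℤ))
    (θ : (Fin d → ℤ) → Fin 4 → ℝ) (hθ0 : ∀ x ∈ Λ, ∀ j, 0 ≤ θ x j)
    (a b : ↥Λ) (hab : a ≠ b) (δ : ℝ)
    (hpair : ∀ i j : Fin 4,
      |θ a.1 i * θ b.1 j - θ b.1 i * θ a.1 j| ≤ δ * (θ b.1 i * θ a.1 j))
    (ζ : ↥Λ → Fin 4) :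
    |prodWeight Λ θ (swapAt ζ a b) - prodWeight Λ θ ζ| ≤ δ * prodWeight Λ θ ζ := by
  classical
  set R : ℝ := ∏ z ∈ (Finset.univ.erase a).erase b, θ z.1 (ζ z) with hRdef
  have hR : 0 ≤ R := Finset.prod_nonneg fun z _ => hθ0 z.1 z.2 _
  have hb' : b ∈ Finset.univ.erase a := Finset.mem_erase.2 ⟨hab.symm, Finset.mem_univ b⟩
  have hWζ : prodWeight Λ θ ζ = θ a.1 (ζ a) * (θ b.1 (ζ b) * R) := by
    rw [prodWeight, ← Finset.mul_prod_erase Finset.univ _ (Finset.mem_univ a),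
      ← Finset.mul_prod_erase _ _ hb']
  have hWT : prodWeight Λ θ (swapAt ζ a b) = θ a.1 (ζ b) * (θ b.1 (ζ a) * R) := by
    rw [prodWeight, ← Finset.mul_prod_erase Finset.univ _ (Finset.mem_univ a),
      ← Finset.mul_prod_erase _ _ hb']
    have e1 : swapAt ζ a b a = ζ b := by simp [swapAt]
    have e2 : swapAt ζ a b b = ζ a := by simp [swapAt, hab.symm]
    rw [e1, e2]
    congr 2
    refine Finset.prod_congr rfl fun z hz => ?_
    rw [Finset.mem_erase, Finset.mem_erase] at hz
    simp [swapAt, hz.1, hz.2.1]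
  have hX := hpair (ζ b) (ζ a)
  calc |prodWeight Λ θ (swapAt ζ a b) - prodWeight Λ θ ζ|
      = R * |θ a.1 (ζ b) * θ b.1 (ζ a) - θ b.1 (ζ b) * θ a.1 (ζ a)| := by
        rw [hWT, hWζ, show θ a.1 (ζ b) * (θ b.1 (ζ a) * R) - θ a.1 (ζ a) * (θ b.1 (ζ b) * R)
          = R * (θ a.1 (ζ b) * θ b.1 (ζ a) - θ b.1 (ζ b) * θ a.1 (ζ a)) by ring,
          abs_mul, abs_of_nonneg hR]
    _ ≤ R * (δ * (θ b.1 (ζ b) * θ a.1 (ζ a))) := mul_le_mul_of_nonneg_left hX hR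
    _ = δ * prodWeight Λ θ ζ := by rw [hWζ]; ring

/-- Bound for the exchange part of the generator:
`⟨√f, 𝓛√f⟩_{ν_θ} ≤ −A₀ 𝒟⁰(f) + A₀′ |Λ| N⁻² ∫ f dν_θ`, with constants
depending only on `d`, `c₀` and `K`, provided the single-site probabilities of
`ν_θ` are bounded below by `c₀` and vary smoothly on scale `N` between
nearest-neighbour sites. -/
theorem exchange_generator_bound (d : ℕ) (hd : 1 ≤ d) (c0 K : ℝ)
    (hc0 : 0 < c0) (hc0' : c0 < 1) (hK : 0 < K) :
    ∃ A0 > 0, ∃ A0' > 0, ∀ N : ℕ, 1 ≤ N →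
      ∀ (Λ : Finset (Fin d → ℤ)) (θ : (Fin d → ℤ) → Fin 4 → ℝ),
      (∀ x ∈ Λ, ∀ j, c0 ≤ θ x j) → (∀ x ∈ Λ, ∑ j, θ x j = 1) →
      (∀ x ∈ Λ, ∀ y ∈ Λ,
        (∃ k : Fin d, y = x + Pi.single k 1 ∨ x = y + Pi.single k 1) →
        ∀ i j : Fin 4, |θ x i * θ y j - θ y i * θ x j| ≤ K / N * (θ y i * θ x j)) →
      ∀ f : (↥Λ → Fin 4) → ℝ, (∀ ζ, 0 ≤ f ζ) →
      ∑ ζ : ↥Λ → Fin 4, prodWeight Λ θ ζ *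
          (Real.sqrt (f ζ) * exchGen Λ (fun χ => Real.sqrt (f χ)) ζ)
        ≤ -A0 * exchDirichlet Λ θ f
            + A0' * (Λ.card : ℝ) / (N : ℝ) ^ 2 *
                ∑ ζ : ↥Λ → Fin 4, prodWeight Λ θ ζ * f ζ := by
  classical
  have hd' : (0:ℝ) < (d:ℝ) := by exact_mod_cast hd
  refine ⟨1/4, by norm_num, (d : ℝ) * K ^ 2 * (2 + K) / 4, by positivity, ?_⟩
  intro N hN Λ θ hθc0 hθsum hreg f hf
  have hθ0 : ∀ x ∈ Λ, ∀ j, 0 ≤ θ x j := fun x hx j => le_trans hc0.le (hθc0 x hx j)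
  have hN1 : (1:ℝ) ≤ (N:ℝ) := by exact_mod_cast hN
  have hN0 : (0:ℝ) < (N:ℝ) := by linarith
  set δ : ℝ := K / N with hδdef
  have hδ0 : 0 ≤ δ := div_nonneg hK.le hN0.le
  have hδK : δ ≤ K := div_le_self hK.le hN1
  have hW0 : ∀ ζ, 0 ≤ prodWeight Λ θ ζ := prodWeight_nonneg Λ θ hθ0
  set If := ∑ ζ : ↥Λ → Fin 4, prodWeight Λ θ ζ * f ζ with hIfdef
  have hIf0 : 0 ≤ If := sum_nonneg fun ζ _ => mul_nonneg (hW0 ζ) (hf ζ)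
  set C : ℝ := K ^ 2 * (2 + K) / 4 / (N:ℝ) ^ 2 with hCdef
  have hC0 : 0 ≤ C := by positivity
  have hL : ∑ ζ : ↥Λ → Fin 4, prodWeight Λ θ ζ *
        (Real.sqrt (f ζ) * exchGen Λ (fun χ => Real.sqrt (f χ)) ζ)
      = ∑ k : Fin d, ∑ x : ↥Λ,
          if h : (x.1 + Pi.single k 1) ∈ Λ then
            ∑ ζ : ↥Λ → Fin 4, prodWeight Λ θ ζ *
              (Real.sqrt (f ζ) *
                (Real.sqrt (f (swapAt ζ x ⟨x.1 + Pi.single k 1, h⟩)) - Real.sqrt (f ζ)))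
          else 0 := by
    simp only [exchGen, Finset.mul_sum, mul_dite, mul_zero]
    rw [Finset.sum_comm]
    refine sum_congr rfl fun k _ => ?_
    rw [Finset.sum_comm]
    refine sum_congr rfl fun x _ => ?_
    by_cases h : (x.1 + Pi.single k 1) ∈ Λ
    · simp only [dif_pos h]
    · simp only [dif_neg h, Finset.sum_const_zero]
  rw [hL]
  have hbond : ∀ (k : Fin d) (x : ↥Λ),
      (if h : (x.1 + Pi.single k 1) ∈ Λ then
          ∑ ζ : ↥Λ → Fin 4, prodWeight Λ θ ζ *
            (Real.sqrt (f ζ) *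
              (Real.sqrt (f (swapAt ζ x ⟨x.1 + Pi.single k 1, h⟩)) - Real.sqrt (f ζ)))
        else 0)
      ≤ -(1/4) * (if h : (x.1 + Pi.single k 1) ∈ Λ then
          ∑ ζ : ↥Λ → Fin 4, prodWeight Λ θ ζ *
            (Real.sqrt (f (swapAt ζ x ⟨x.1 + Pi.single k 1, h⟩)) - Real.sqrt (f ζ)) ^ 2
        else 0) + C * If := by
    intro k x
    by_cases h : (x.1 + Pi.single k 1) ∈ Λ
    · simp only [dif_pos h]
      set b : ↥Λ := ⟨x.1 + Pi.single k 1, h⟩ with hbdef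
      have hab : x ≠ b := by
        intro he
        have h2 : x.1 k = x.1 k + 1 := by
          have h1 := congrArg (fun z : ↥Λ => z.1 k) he
          simpa [hbdef, Pi.single_eq_same] using h1
        omega
      have hpair := hreg x.1 x.2 b.1 h ⟨k, Or.inl rfl⟩
      have hclose : ∀ ζ : ↥Λ → Fin 4,
          |prodWeight Λ θ (swapAt ζ x b) - prodWeight Λ θ ζ| ≤ δ * prodWeight Λ θ ζ :=
        prodWeight_swap_close Λ θ hθ0 x b hab δ (fun i j => hpair i j)
      have hkey := key_bound (fun ζ : ↥Λ → Fin 4 => swapAt ζ x b) (swapAt_involutive x b)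
        (prodWeight Λ θ) (fun ζ => Real.sqrt (f ζ)) hW0
        (fun ζ => Real.sqrt_nonneg _) δ hδ0 hclose
      have hsq : ∑ ζ : ↥Λ → Fin 4, prodWeight Λ θ ζ * (Real.sqrt (f ζ)) ^ 2 = If :=
        sum_congr rfl fun ζ _ => by rw [Real.sq_sqrt (hf ζ)]
      rw [hsq] at hkey
      refine hkey.trans ?_
      have hCle : δ ^ 2 * (2 + δ) / 4 ≤ C := by
        have h1 : δ ^ 2 * (2 + δ) ≤ δ ^ 2 * (2 + K) :=
          mul_le_mul_of_nonneg_left (by linarith) (sq_nonneg δ)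
        have h2 : δ ^ 2 * (2 + K) / 4 = C := by
          rw [hCdef, hδdef, div_pow]; ring
        linarith
      have := mul_le_mul_of_nonneg_right hCle hIf0
      linarith
    · simp only [dif_neg h, mul_zero, neg_zero, zero_add]
      have := mul_nonneg hC0 hIf0
      linarith
  calc ∑ k : Fin d, ∑ x : ↥Λ,
        (if h : (x.1 + Pi.single k 1) ∈ Λ then
          ∑ ζ : ↥Λ → Fin 4, prodWeight Λ θ ζ *
            (Real.sqrt (f ζ) *
              (Real.sqrt (f (swapAt ζ x ⟨x.1 + Pi.single k 1, h⟩)) - Real.sqrt (f ζ)))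
        else 0)
      ≤ ∑ k : Fin d, ∑ x : ↥Λ,
          (-(1/4) * (if h : (x.1 + Pi.single k 1) ∈ Λ then
            ∑ ζ : ↥Λ → Fin 4, prodWeight Λ θ ζ *
              (Real.sqrt (f (swapAt ζ x ⟨x.1 + Pi.single k 1, h⟩)) - Real.sqrt (f ζ)) ^ 2
          else 0) + C * If) :=
        sum_le_sum fun k _ => sum_le_sum fun x _ => hbond k x
    _ = -(1/4) * exchDirichlet Λ θ f + ((d:ℝ) * (Λ.card:ℝ)) * (C * If) := by
        rw [exchDirichlet]
        simp only [Finset.sum_add_distrib, Finset.sum_const, Finset.card_univ,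
          Fintype.card_coe, nsmul_eq_mul, Fintype.card_fin, ← Finset.mul_sum]
        ring
    _ = -(1/4) * exchDirichlet Λ θ f
          + (d:ℝ) * K ^ 2 * (2 + K) / 4 * (Λ.card:ℝ) / (N:ℝ) ^ 2 * If := by
        rw [hCdef]; ring

end
end

section
/- Let d ≥ 1, c₀ ∈ (0,1), K > 0 and N ≥ 1, let Λ ⊂ ℤ^d be a finite set, and let θ assign to each x ∈ Λ a probability vector θ(x) = (θ₀(x),θ₁(x),θ₂(x),θ₃(x)) with all entries ≥ c₀ and such that |θ_i(x)θ_j(y) − θ_i(y)θ_j(x)| ≤ (K/N)·θ_i(y)θ_j(x) for all nearest-neighbour pairs x, y ∈ Λ and all i, j ∈ {0,1,2,3}; let ν_θ be the corresponding product measure. Then there exists a constant C > 0 depending only on c₀ and K such that for every nearest-neighbour pair x, y = x + e_k in Λ and every f : {0,1,2,3}^Λ → [0,∞), ∫ (f(η^{x,y}) − f(η)) dν_θ(η) ≤ (1/2) ∫ (√f(η^{x,y}) − √f(η))² dν_θ(η) + C N^{−2} ∫ f dν_θ. -/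
open Finset

noncomputable section

lemma sum_swap_reindex {d : ℕ} {Λ : Finset (Fin d → ℤ)} (a b : ↥Λ)
    (g : (↥Λ → Fin 4) → ℝ) :
    ∑ ζ : ↥Λ → Fin 4, g (swapAt ζ a b) = ∑ ζ : ↥Λ → Fin 4, g ζ :=
  Fintype.sum_bijective _ (swapAt_involutive a b).bijective _ _ (fun _ => rfl)

lemma exchange_pointwise_bound (W WS p q e : ℝ) (hW : 0 ≤ W)
    (hp0 : 0 ≤ p) (hq0 : 0 ≤ q)
    (hWl : -(e * W) ≤ WS - W) (hWu : WS - W ≤ e * W) :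
    (W - WS) * (q ^ 2 - p ^ 2) ≤
      (1 / 2) * (W * (q - p) ^ 2) + e ^ 2 * (W * q ^ 2) + e ^ 2 * (W * p ^ 2) := by
  rcases le_total p q with h | h
  · have h1' : (W - WS) * (q ^ 2 - p ^ 2) ≤ (e * W) * (q ^ 2 - p ^ 2) :=
      mul_le_mul_of_nonneg_right (by linarith) (by nlinarith)
    refine h1'.trans ?_
    nlinarith [mul_nonneg hW (sq_nonneg (q - p - e * (q + p))),
      mul_nonneg (mul_nonneg hW (sq_nonneg e)) (sq_nonneg (q - p))]
  · have h1' : (W - WS) * (q ^ 2 - p ^ 2) ≤ (-(e * W)) * (q ^ 2 - p ^ 2) :=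
      mul_le_mul_of_nonpos_right (by linarith) (by nlinarith)
    refine h1'.trans ?_
    nlinarith [mul_nonneg hW (sq_nonneg (p - q - e * (p + q))),
      mul_nonneg (mul_nonneg hW (sq_nonneg e)) (sq_nonneg (p - q))]

/-- For a product measure `ν_θ` with single-site probabilities bounded below
by `c₀`, varying on scale `N` between nearest neighbours, for every
nearest-neighbour pair `x, y = x + e_k` in `Λ`,
`∫ (f(η^{x,y}) − f(η)) dν_θ ≤ ½ ∫ (√f(η^{x,y}) − √f(η))² dν_θ + C N⁻² ∫ f dν_θ`
with a constant `C` depending only on `c₀` and `K`. -/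
theorem single_exchange_integral_bound (c0 K : ℝ)
    (hc0 : 0 < c0) (hc0' : c0 < 1) (hK : 0 < K) :
    ∃ C > 0, ∀ d : ℕ, 1 ≤ d → ∀ N : ℕ, 1 ≤ N →
      ∀ (Λ : Finset (Fin d → ℤ)) (θ : (Fin d → ℤ) → Fin 4 → ℝ),
      (∀ x ∈ Λ, ∀ j, c0 ≤ θ x j) → (∀ x ∈ Λ, ∑ j, θ x j = 1) →
      (∀ x ∈ Λ, ∀ y ∈ Λ,
        (∃ k : Fin d, y = x + Pi.single k 1 ∨ x = y + Pi.single k 1) →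
        ∀ i j : Fin 4, |θ x i * θ y j - θ y i * θ x j| ≤ K / N * (θ y i * θ x j)) →
      ∀ (x : Fin d → ℤ) (hx : x ∈ Λ) (k : Fin d) (hy : x + Pi.single k 1 ∈ Λ),
      ∀ f : (↥Λ → Fin 4) → ℝ, (∀ ζ, 0 ≤ f ζ) →
      ∑ ζ : ↥Λ → Fin 4, prodWeight Λ θ ζ *
          (f (swapAt ζ ⟨x, hx⟩ ⟨x + Pi.single k 1, hy⟩) - f ζ)
        ≤ (1 / 2) * ∑ ζ : ↥Λ → Fin 4, prodWeight Λ θ ζ *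
              (Real.sqrt (f (swapAt ζ ⟨x, hx⟩ ⟨x + Pi.single k 1, hy⟩))
                - Real.sqrt (f ζ)) ^ 2
          + C / (N : ℝ) ^ 2 * ∑ ζ : ↥Λ → Fin 4, prodWeight Λ θ ζ * f ζ := by
  refine ⟨K ^ 2 * (2 + K) / 2, by positivity, ?_⟩
  intro d hd N hN Λ θ hθc hθsum hθnb x hx k hy f hf
  have hN1 : (1 : ℝ) ≤ (N : ℝ) := by exact_mod_cast hN
  set ε : ℝ := K / N with hεdef
  have hε0 : 0 < ε := div_pos hK (by linarith)
  have hεK : ε ≤ K := div_le_self hK.le hN1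
  set a : ↥Λ := ⟨x, hx⟩ with ha
  set b : ↥Λ := ⟨x + Pi.single k 1, hy⟩ with hb
  have hab : a ≠ b := by
    simp only [ha, hb, ne_eq, Subtype.mk.injEq]
    intro h
    have h2 := congrFun h k
    simp [Pi.single_apply] at h2
  have hθpos : ∀ z : ↥Λ, ∀ j, 0 < θ z.1 j := fun z j => lt_of_lt_of_le hc0 (hθc z.1 z.2 j)
  have hw0 : ∀ ζ : ↥Λ → Fin 4, 0 ≤ prodWeight Λ θ ζ := fun ζ =>
    Finset.prod_nonneg fun z _ => (hθpos z (ζ z)).le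
  have hbmem : b ∈ Finset.univ.erase a :=
    Finset.mem_erase.mpr ⟨Ne.symm hab, Finset.mem_univ b⟩
  have hsplit : ∀ η : ↥Λ → Fin 4, prodWeight Λ θ η =
      θ a.1 (η a) * (θ b.1 (η b) * ∏ z ∈ (Finset.univ.erase a).erase b, θ z.1 (η z)) := by
    intro η
    rw [prodWeight, ← Finset.mul_prod_erase Finset.univ (fun z : ↥Λ => θ z.1 (η z))
        (Finset.mem_univ a), ← Finset.mul_prod_erase _ _ hbmem]
  have hswapa : ∀ ζ : ↥Λ → Fin 4, swapAt ζ a b a = ζ b := fun ζ => by simp [swapAt]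
  have hswapb : ∀ ζ : ↥Λ → Fin 4, swapAt ζ a b b = ζ a := fun ζ => by
    simp [swapAt, Ne.symm hab]
  have hswapP : ∀ ζ : ↥Λ → Fin 4,
      ∏ z ∈ (Finset.univ.erase a).erase b, θ z.1 (swapAt ζ a b z)
        = ∏ z ∈ (Finset.univ.erase a).erase b, θ z.1 (ζ z) := by
    intro ζ
    refine Finset.prod_congr rfl fun z hz => ?_
    rw [Finset.mem_erase, Finset.mem_erase] at hz
    simp [swapAt, hz.1, hz.2.1]
  have hwT : ∀ ζ : ↥Λ → Fin 4,
      |prodWeight Λ θ (swapAt ζ a b) - prodWeight Λ θ ζ| ≤ ε * prodWeight Λ θ ζ := by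
    intro ζ
    have hD := hθnb a.1 a.2 b.1 b.2 ⟨k, Or.inl rfl⟩ (ζ b) (ζ a)
    have hP0 : 0 ≤ ∏ z ∈ (Finset.univ.erase a).erase b, θ z.1 (ζ z) :=
      Finset.prod_nonneg fun z _ => (hθpos z _).le
    have e1 : prodWeight Λ θ (swapAt ζ a b) - prodWeight Λ θ ζ =
        (θ a.1 (ζ b) * θ b.1 (ζ a) - θ b.1 (ζ b) * θ a.1 (ζ a)) *
          ∏ z ∈ (Finset.univ.erase a).erase b, θ z.1 (ζ z) := by
      rw [hsplit (swapAt ζ a b), hsplit ζ, hswapa ζ, hswapb ζ, hswapP ζ]; ring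
    rw [e1, abs_mul, abs_of_nonneg hP0]
    calc |θ a.1 (ζ b) * θ b.1 (ζ a) - θ b.1 (ζ b) * θ a.1 (ζ a)| *
          ∏ z ∈ (Finset.univ.erase a).erase b, θ z.1 (ζ z)
        ≤ (K / ↑N * (θ b.1 (ζ b) * θ a.1 (ζ a))) *
          ∏ z ∈ (Finset.univ.erase a).erase b, θ z.1 (ζ z) :=
          mul_le_mul_of_nonneg_right hD hP0
      _ = ε * prodWeight Λ θ ζ := by rw [hsplit ζ]; ring
  have h1 : ∑ ζ : ↥Λ → Fin 4, prodWeight Λ θ (swapAt ζ a b) * f (swapAt ζ a b)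
      = ∑ ζ : ↥Λ → Fin 4, prodWeight Λ θ ζ * f ζ :=
    sum_swap_reindex a b (fun ζ => prodWeight Λ θ ζ * f ζ)
  have h2 : ∑ ζ : ↥Λ → Fin 4, prodWeight Λ θ (swapAt ζ a b) * f ζ
      = ∑ ζ : ↥Λ → Fin 4, prodWeight Λ θ ζ * f (swapAt ζ a b) := by
    have h := sum_swap_reindex a b (fun ζ => prodWeight Λ θ ζ * f (swapAt ζ a b))
    rw [← h]
    refine Finset.sum_congr rfl fun ζ _ => ?_
    have hi := swapAt_involutive a b ζ
    simp only at hi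
    rw [hi]
  have hkey : ∑ ζ : ↥Λ → Fin 4, prodWeight Λ θ ζ * (f (swapAt ζ a b) - f ζ)
      = (1 / 2) * ∑ ζ : ↥Λ → Fin 4,
          (prodWeight Λ θ ζ - prodWeight Λ θ (swapAt ζ a b)) * (f (swapAt ζ a b) - f ζ) := by
    have eL : ∑ ζ : ↥Λ → Fin 4, prodWeight Λ θ ζ * (f (swapAt ζ a b) - f ζ)
        = ∑ ζ : ↥Λ → Fin 4, prodWeight Λ θ ζ * f (swapAt ζ a b)
          - ∑ ζ : ↥Λ → Fin 4, prodWeight Λ θ ζ * f ζ := by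
      rw [← Finset.sum_sub_distrib]
      exact Finset.sum_congr rfl fun ζ _ => mul_sub _ _ _
    have eR : ∑ ζ : ↥Λ → Fin 4,
          (prodWeight Λ θ ζ - prodWeight Λ θ (swapAt ζ a b)) * (f (swapAt ζ a b) - f ζ)
        = (∑ ζ : ↥Λ → Fin 4, prodWeight Λ θ ζ * f (swapAt ζ a b)
            - ∑ ζ : ↥Λ → Fin 4, prodWeight Λ θ ζ * f ζ)
          - (∑ ζ : ↥Λ → Fin 4, prodWeight Λ θ (swapAt ζ a b) * f (swapAt ζ a b)
            - ∑ ζ : ↥Λ → Fin 4, prodWeight Λ θ (swapAt ζ a b) * f ζ) := by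
      rw [← Finset.sum_sub_distrib, ← Finset.sum_sub_distrib, ← Finset.sum_sub_distrib]
      exact Finset.sum_congr rfl fun ζ _ => by ring
    rw [eL, eR, h1, h2]; ring
  have hpt : ∀ ζ : ↥Λ → Fin 4,
      (prodWeight Λ θ ζ - prodWeight Λ θ (swapAt ζ a b)) * (f (swapAt ζ a b) - f ζ) ≤
        (1 / 2) * (prodWeight Λ θ ζ *
            (Real.sqrt (f (swapAt ζ a b)) - Real.sqrt (f ζ)) ^ 2)
          + ε ^ 2 * (prodWeight Λ θ ζ * f (swapAt ζ a b))
          + ε ^ 2 * (prodWeight Λ θ ζ * f ζ) := by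
    intro ζ
    obtain ⟨hWl, hWu⟩ := abs_le.mp (hwT ζ)
    have hp2 : Real.sqrt (f ζ) ^ 2 = f ζ := Real.sq_sqrt (hf ζ)
    have hq2 : Real.sqrt (f (swapAt ζ a b)) ^ 2 = f (swapAt ζ a b) := Real.sq_sqrt (hf _)
    have hmain := exchange_pointwise_bound (prodWeight Λ θ ζ)
      (prodWeight Λ θ (swapAt ζ a b)) (Real.sqrt (f ζ)) (Real.sqrt (f (swapAt ζ a b))) ε
      (hw0 ζ) (Real.sqrt_nonneg _) (Real.sqrt_nonneg _) hWl hWu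
    rw [hp2, hq2] at hmain
    exact hmain
  have hS2 : ∑ ζ : ↥Λ → Fin 4,
        (prodWeight Λ θ ζ - prodWeight Λ θ (swapAt ζ a b)) * (f (swapAt ζ a b) - f ζ)
      ≤ (1 / 2) * ∑ ζ : ↥Λ → Fin 4, prodWeight Λ θ ζ *
            (Real.sqrt (f (swapAt ζ a b)) - Real.sqrt (f ζ)) ^ 2
        + ε ^ 2 * ∑ ζ : ↥Λ → Fin 4, prodWeight Λ θ ζ * f (swapAt ζ a b)
        + ε ^ 2 * ∑ ζ : ↥Λ → Fin 4, prodWeight Λ θ ζ * f ζ := by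
    calc ∑ ζ : ↥Λ → Fin 4,
          (prodWeight Λ θ ζ - prodWeight Λ θ (swapAt ζ a b)) * (f (swapAt ζ a b) - f ζ)
        ≤ ∑ ζ : ↥Λ → Fin 4,
            ((1 / 2) * (prodWeight Λ θ ζ *
                (Real.sqrt (f (swapAt ζ a b)) - Real.sqrt (f ζ)) ^ 2)
              + ε ^ 2 * (prodWeight Λ θ ζ * f (swapAt ζ a b))
              + ε ^ 2 * (prodWeight Λ θ ζ * f ζ)) :=
          Finset.sum_le_sum fun ζ _ => hpt ζ
      _ = _ := by
          simp only [Finset.sum_add_distrib, Finset.mul_sum]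
  have hfT : ∑ ζ : ↥Λ → Fin 4, prodWeight Λ θ ζ * f (swapAt ζ a b)
      ≤ (1 + ε) * ∑ ζ : ↥Λ → Fin 4, prodWeight Λ θ ζ * f ζ := by
    rw [← h2, Finset.mul_sum]
    refine Finset.sum_le_sum fun ζ _ => ?_
    have hu := (abs_le.mp (hwT ζ)).2
    have hWb : prodWeight Λ θ (swapAt ζ a b) ≤ (1 + ε) * prodWeight Λ θ ζ := by linarith
    calc prodWeight Λ θ (swapAt ζ a b) * f ζ
        ≤ ((1 + ε) * prodWeight Λ θ ζ) * f ζ := mul_le_mul_of_nonneg_right hWb (hf ζ)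
      _ = (1 + ε) * (prodWeight Λ θ ζ * f ζ) := by ring
  have hA0 : 0 ≤ ∑ ζ : ↥Λ → Fin 4, prodWeight Λ θ ζ *
      (Real.sqrt (f (swapAt ζ a b)) - Real.sqrt (f ζ)) ^ 2 :=
    Finset.sum_nonneg fun ζ _ => mul_nonneg (hw0 ζ) (sq_nonneg _)
  have hF0 : 0 ≤ ∑ ζ : ↥Λ → Fin 4, prodWeight Λ θ ζ * f ζ :=
    Finset.sum_nonneg fun ζ _ => mul_nonneg (hw0 ζ) (hf ζ)
  have hε2 : ε ^ 2 = K ^ 2 / (N : ℝ) ^ 2 := by rw [hεdef, div_pow]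
  have hCN : ε ^ 2 * (2 + ε) ≤ 2 * (K ^ 2 * (2 + K) / 2 / (N : ℝ) ^ 2) := by
    have h1' : ε ^ 2 * (2 + ε) ≤ ε ^ 2 * (2 + K) := by nlinarith [sq_nonneg ε]
    have h2' : ε ^ 2 * (2 + K) = 2 * (K ^ 2 * (2 + K) / 2 / (N : ℝ) ^ 2) := by
      rw [hε2]; ring
    linarith
  have t1 := mul_le_mul_of_nonneg_left hfT (sq_nonneg ε)
  have t2 := mul_le_mul_of_nonneg_right hCN hF0
  have tid : ε ^ 2 * ((1 + ε) * ∑ ζ : ↥Λ → Fin 4, prodWeight Λ θ ζ * f ζ)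
      + ε ^ 2 * ∑ ζ : ↥Λ → Fin 4, prodWeight Λ θ ζ * f ζ
      = (ε ^ 2 * (2 + ε)) * ∑ ζ : ↥Λ → Fin 4, prodWeight Λ θ ζ * f ζ := by ring
  rw [hkey]
  linarith [hS2, t1, t2, tid, hA0, hF0]
end
end
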